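/- arXiv:1311.1150 — 9 statements merged into one kernel-verified Lean document; each statement's English description precedes it below -/
import Mathlib

section
/- Let I ⊆ ℝ be an open interval, b, c, f₁ : ℝ → ℝ with c(x) ≠ 0 on I, let C₁ ∈ ℝ, and let F be differentiable on I with F'(x) = (f₁(x) − b(x)²)/(2c(x)) for all x ∈ I. Define a(x) = ( f₁(x) − ( b(x) + c(x)·(F(x) − C₁) )² ) / (4c(x)). Then the function y_p(x) = (F(x) − C₁)/2 solves the Riccati equation y_p'(x) = a(x) + b(x)y_p(x) + c(x)y_p(x)² for all x ∈ I. -/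
/-! Expanding the square in `a` gives `a = (f₁ - b²)/(4c) - b y_p - c y_p²` for `y_p = (F - C₁)/2`,
so the right-hand side of the Riccati equation collapses to `(f₁ - b²)/(4c) = F'/2 = y_p'`. -/

lemma riccati_case1_rhs_eq {b c f u : ℝ} (hc : c ≠ 0) :
    (f - (b + c * u) ^ 2) / (4 * c) + b * (u / 2) + c * (u / 2) ^ 2 =
      (f - b ^ 2) / (2 * c) / 2 := by
  field_simp
  ring

/-- Particular solution underlying Theorem 1 (Case 1): with
`F' = (f₁ − b²)/(2c)` and
`a = (f₁ − (b + c(F − C₁))²)/(4c)`, the function `y_p = (F − C₁)/2`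
solves the Riccati equation `y' = a + b y + c y²` on the open interval. -/
theorem riccati_case1_particular
    (p q : ℝ) (a b c f₁ F : ℝ → ℝ) (C₁ : ℝ)
    (hc : ∀ x ∈ Set.Ioo p q, c x ≠ 0)
    (hF : ∀ x ∈ Set.Ioo p q,
      HasDerivAt F ((f₁ x - b x ^ 2) / (2 * c x)) x)
    (ha : ∀ x ∈ Set.Ioo p q,
      a x = (f₁ x - (b x + c x * (F x - C₁)) ^ 2) / (4 * c x)) :
    ∀ x ∈ Set.Ioo p q,
      HasDerivAt (fun t => (F t - C₁) / 2)
        (a x + b x * ((F x - C₁) / 2) + c x * ((F x - C₁) / 2) ^ 2) x := by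
  intro x hx
  rw [ha x hx, riccati_case1_rhs_eq (hc x hx)]
  exact ((hF x hx).sub_const C₁).div_const 2
end

section
/- Let I ⊆ ℝ be an open interval, b, c, f₁ : ℝ → ℝ with c(x) ≠ 0 on I, let C₁ ∈ ℝ, let F be differentiable on I with F'(x) = (f₁(x) − b(x)²)/(2c(x)), and define a(x) = ( f₁(x) − ( b(x) + c(x)·(F(x) − C₁) )² ) / (4c(x)). Let B be differentiable on I with B'(x) = b(x) + c(x)·(F(x) − C₁), and G differentiable on I with G'(x) = c(x)·exp(B(x)). Then for every constant C₀ ∈ ℝ, the function y(x) = (F(x) − C₁)/2 + exp(B(x))/(C₀ − G(x)) satisfies y'(x) = a(x) + b(x)y(x) + c(x)y(x)² at every x ∈ I with C₀ − G(x) ≠ 0. -/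
/-!
The Riccati equation `y' = a + b y + c y²` is solved by the substitution `y = u + w` around a
particular solution `u`: then `w` satisfies the Bernoulli equation `w' = (b + 2 c u) w + c w²`.
Here the choice of `a` is exactly what makes `u = (F − C₁)/2` a particular solution, and since
`B' = b + 2 c u`, the Bernoulli equation is solved by `w = e^B / (C₀ − G)` (its reciprocal
`(C₀ − G) e^{-B}` solves the linear equation `v' = -(b + 2 c u) v - c`).
-/

open Real

namespace Riccati

theorem hasDerivAt_add_of_bernoulli {u w : ℝ → ℝ} {a b c x : ℝ}
    (hu : HasDerivAt u (a + b * u x + c * u x ^ 2) x)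
    (hw : HasDerivAt w ((b + 2 * c * u x) * w x + c * w x ^ 2) x) :
    HasDerivAt (fun t => u t + w t) (a + b * (u x + w x) + c * (u x + w x) ^ 2) x :=
  (hu.add hw).congr_deriv (by ring)

theorem hasDerivAt_exp_div_const_sub {B G : ℝ → ℝ} {β c C₀ x : ℝ}
    (hB : HasDerivAt B β x) (hG : HasDerivAt G (c * exp (B x)) x) (hx : C₀ - G x ≠ 0) :
    HasDerivAt (fun t => exp (B t) / (C₀ - G t))
      (β * (exp (B x) / (C₀ - G x)) + c * (exp (B x) / (C₀ - G x)) ^ 2) x :=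
  (hB.exp.div (hG.const_sub C₀) hx).congr_deriv (by field_simp; ring)

theorem hasDerivAt_half_sub_const {F : ℝ → ℝ} {b c f₁ x : ℝ} (C₁ : ℝ) (hc : c ≠ 0)
    (hF : HasDerivAt F ((f₁ - b ^ 2) / (2 * c)) x) :
    HasDerivAt (fun t => (F t - C₁) / 2)
      ((f₁ - (b + c * (F x - C₁)) ^ 2) / (4 * c) + b * ((F x - C₁) / 2)
        + c * ((F x - C₁) / 2) ^ 2) x :=
  ((hF.sub_const C₁).div_const 2).congr_deriv (by field_simp; ring)

end Riccati

open Riccati in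
/-- Theorem 1 (Case 1): with `F' = (f₁ − b²)/(2c)`,
`a = (f₁ − (b + c(F − C₁))²)/(4c)`, `B' = b + c(F − C₁)` and `G' = c · exp B`,
the function `y = (F − C₁)/2 + exp B / (C₀ − G)` solves the Riccati equation
wherever `C₀ − G ≠ 0`. -/
theorem riccati_case1_general
    (p q : ℝ) (a b c f₁ F B G : ℝ → ℝ) (C₁ : ℝ)
    (hc : ∀ x ∈ Set.Ioo p q, c x ≠ 0)
    (hF : ∀ x ∈ Set.Ioo p q,
      HasDerivAt F ((f₁ x - b x ^ 2) / (2 * c x)) x)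
    (ha : ∀ x ∈ Set.Ioo p q,
      a x = (f₁ x - (b x + c x * (F x - C₁)) ^ 2) / (4 * c x))
    (hB : ∀ x ∈ Set.Ioo p q,
      HasDerivAt B (b x + c x * (F x - C₁)) x)
    (hG : ∀ x ∈ Set.Ioo p q, HasDerivAt G (c x * Real.exp (B x)) x)
    (C₀ : ℝ) :
    ∀ x ∈ Set.Ioo p q, C₀ - G x ≠ 0 →
      HasDerivAt (fun t => (F t - C₁) / 2 + Real.exp (B t) / (C₀ - G t))
        (a x + b x * ((F x - C₁) / 2 + Real.exp (B x) / (C₀ - G x))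
          + c x * ((F x - C₁) / 2 + Real.exp (B x) / (C₀ - G x)) ^ 2) x := by
  intro x hx hG₀
  have hu := hasDerivAt_half_sub_const C₁ (hc x hx) (hF x hx)
  have hw := hasDerivAt_exp_div_const_sub (hB x hx) (hG x hx) hG₀
  rw [ha x hx]
  exact hasDerivAt_add_of_bernoulli hu (hw.congr_deriv (by ring))
end

section
/- Let I ⊆ ℝ be an open interval, b, c, f₂ : ℝ → ℝ with c(x) ≠ 0 and f₂(x) + b(x)² ≥ 0 for all x ∈ I, and let ε ∈ {1, −1}. Suppose y_p(x) = ( −b(x) + ε·√(f₂(x) + b(x)²) ) / (2c(x)) is differentiable on I, and define a(x) = y_p'(x) − f₂(x)/(4c(x)). Let S be differentiable on I with S'(x) = ε·√(f₂(x) + b(x)²), and G differentiable on I with G'(x) = c(x)·exp(S(x)). Then for every constant C ∈ ℝ, the function y(x) = y_p(x) + exp(S(x))/(C − G(x)) satisfies y'(x) = a(x) + b(x)y(x) + c(x)y(x)² at every x ∈ I with C − G(x) ≠ 0. -/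
/-!
Substituting `y = y_p + u` into `y' = a + b y + c y²` shows that `y` is a solution as soon as
`y_p` is one and `u` solves the Bernoulli equation `u' = (b + 2 c y_p) u + c u²`.
With `r = ε √(f₂ + b²)` we have `r² = f₂ + b²`, so `b y_p + c y_p² = (r² - b²)/(4c) = f₂/(4c)`,
and the choice of `a` makes `y_p` a particular solution. Moreover `b + 2 c y_p = r = S'`, and
`u = exp S / (C - G)` solves `u' = S' u + c u²` because `G' = c exp S`.
-/

open Real

theorem hasDerivAt_add_of_riccati_of_bernoulli {yp u : ℝ → ℝ} {x a b c : ℝ}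
    (hyp : HasDerivAt yp (a + b * yp x + c * yp x ^ 2) x)
    (hu : HasDerivAt u ((b + 2 * c * yp x) * u x + c * u x ^ 2) x) :
    HasDerivAt (fun t => yp t + u t) (a + b * (yp x + u x) + c * (yp x + u x) ^ 2) x :=
  (hyp.add hu).congr_deriv (by ring)

theorem hasDerivAt_exp_div_sub {S G : ℝ → ℝ} {x s c C : ℝ} (hS : HasDerivAt S s x)
    (hG : HasDerivAt G (c * exp (S x)) x) (hCG : C - G x ≠ 0) :
    HasDerivAt (fun t => exp (S t) / (C - G t))
      (s * (exp (S x) / (C - G x)) + c * (exp (S x) / (C - G x)) ^ 2) x :=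
  (hS.exp.div ((hasDerivAt_const x C).sub hG) hCG).congr_deriv <| by
    simp only [Pi.sub_apply]
    field_simp
    ring

theorem riccati_rhs_neg_add_div (a : ℝ) {b c : ℝ} (r : ℝ) (hc : c ≠ 0) :
    a + b * ((-b + r) / (2 * c)) + c * ((-b + r) / (2 * c)) ^ 2 =
      a + (r ^ 2 - b ^ 2) / (4 * c) := by
  field_simp
  ring

theorem add_two_mul_neg_add_div (b : ℝ) {c : ℝ} (r : ℝ) (hc : c ≠ 0) :
    b + 2 * c * ((-b + r) / (2 * c)) = r := by
  field_simp
  ring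

theorem sign_mul_sqrt_sq {ε t : ℝ} (hε : ε = 1 ∨ ε = -1) (ht : 0 ≤ t) :
    (ε * √t) ^ 2 = t := by
  rcases hε with rfl | rfl <;> simp [sq_sqrt ht]

/-- Theorem 2 (Case 2): with `y_p = (−b + ε√(f₂ + b²))/(2c)` differentiable,
`a = y_p' − f₂/(4c)`, `S' = ε√(f₂ + b²)` and `G' = c · exp S`, the function
`y = y_p + exp S / (C − G)` solves the Riccati equation wherever `C − G ≠ 0`. -/
theorem riccati_case2_general
    (p q : ℝ) (a b c f₂ S G : ℝ → ℝ) (ε : ℝ) (hε : ε = 1 ∨ ε = -1)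
    (hc : ∀ x ∈ Set.Ioo p q, c x ≠ 0)
    (hnonneg : ∀ x ∈ Set.Ioo p q, f₂ x + b x ^ 2 ≥ 0)
    (d : ℝ → ℝ)
    (hyp : ∀ x ∈ Set.Ioo p q,
      HasDerivAt (fun t => (-b t + ε * Real.sqrt (f₂ t + b t ^ 2)) / (2 * c t))
        (d x) x)
    (ha : ∀ x ∈ Set.Ioo p q, a x = d x - f₂ x / (4 * c x))
    (hS : ∀ x ∈ Set.Ioo p q,
      HasDerivAt S (ε * Real.sqrt (f₂ x + b x ^ 2)) x)
    (hG : ∀ x ∈ Set.Ioo p q, HasDerivAt G (c x * Real.exp (S x)) x)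
    (C : ℝ) :
    ∀ x ∈ Set.Ioo p q, C - G x ≠ 0 →
      HasDerivAt (fun t =>
          (-b t + ε * Real.sqrt (f₂ t + b t ^ 2)) / (2 * c t)
            + Real.exp (S t) / (C - G t))
        (a x + b x * ((-b x + ε * Real.sqrt (f₂ x + b x ^ 2)) / (2 * c x)
            + Real.exp (S x) / (C - G x))
          + c x * ((-b x + ε * Real.sqrt (f₂ x + b x ^ 2)) / (2 * c x)
            + Real.exp (S x) / (C - G x)) ^ 2) x := by
  intro x hx hCG
  have hr : (ε * √(f₂ x + b x ^ 2)) ^ 2 - b x ^ 2 = f₂ x := by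
    rw [sign_mul_sqrt_sq hε (hnonneg x hx)]
    ring
  apply hasDerivAt_add_of_riccati_of_bernoulli
  · rw [riccati_rhs_neg_add_div _ _ (hc x hx), hr, ha x hx, sub_add_cancel]
    exact hyp x hx
  · rw [add_two_mul_neg_add_div _ _ (hc x hx)]
    exact hasDerivAt_exp_div_sub (hS x hx) (hG x hx) hCG
end

section
/- Let I ⊆ ℝ be an open interval, a, c, f₂ : ℝ → ℝ with c(x) ≠ 0 on I, and let H be differentiable on I with H(x) ≠ 0 and H'(x) = a(x) + f₂(x)/(4c(x)) for all x ∈ I. Define b(x) = ( f₂(x) − 4c(x)²H(x)² ) / ( 4c(x)H(x) ). Then y_p(x) = H(x) solves the Riccati equation y_p'(x) = a(x) + b(x)y_p(x) + c(x)y_p(x)² for all x ∈ I. -/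
/-- Particular solution underlying Theorem 3 (Case 3): with `H ≠ 0`,
`H' = a + f₂/(4c)` and `b = (f₂ − 4c²H²)/(4cH)`, the function `y_p = H`
solves the Riccati equation. -/
theorem riccati_case3_particular
    (p q : ℝ) (a b c f₂ H : ℝ → ℝ)
    (hc : ∀ x ∈ Set.Ioo p q, c x ≠ 0)
    (hHne : ∀ x ∈ Set.Ioo p q, H x ≠ 0)
    (hH : ∀ x ∈ Set.Ioo p q,
      HasDerivAt H (a x + f₂ x / (4 * c x)) x)
    (hb : ∀ x ∈ Set.Ioo p q,
      b x = (f₂ x - 4 * c x ^ 2 * H x ^ 2) / (4 * c x * H x)) :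
    ∀ x ∈ Set.Ioo p q,
      HasDerivAt H (a x + b x * H x + c x * H x ^ 2) x := by
  intro x hx
  have hcx := hc x hx
  have hHx := hHne x hx
  have key : a x + b x * H x + c x * H x ^ 2 = a x + f₂ x / (4 * c x) := by
    rw [hb x hx]
    field_simp
    ring
  rw [key]
  exact hH x hx
end

section
/- Let I ⊆ ℝ be an open interval, a, c, f₂ : ℝ → ℝ with c(x) ≠ 0 on I, and let H be differentiable on I with H(x) ≠ 0 and H'(x) = a(x) + f₂(x)/(4c(x)) for all x ∈ I. Define b(x) = ( f₂(x) − 4c(x)²H(x)² ) / ( 4c(x)H(x) ). Let B be differentiable on I with B'(x) = b(x) + 2c(x)H(x) = ( f₂(x) + 4c(x)²H(x)² ) / ( 4c(x)H(x) ), and G differentiable on I with G'(x) = c(x)·exp(B(x)). Then for every constant C₄ ∈ ℝ, the function y(x) = H(x) + exp(B(x))/(C₄ − G(x)) satisfies y'(x) = a(x) + b(x)y(x) + c(x)y(x)² at every x ∈ I with C₄ − G(x) ≠ 0. -/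
/-!
Under the Case 3 relation between `b` and `H`, the function `H` is itself a particular
solution of the Riccati equation: `b H + c H² = f₂ / (4c)`. The classical substitution
`y = H + 1 / v` then linearises the equation to `v' = -(b + 2cH) v - c`, which is solved by
`v = (C₄ - G) e^{-B}`.
-/

theorem hasDerivAt_riccati_particular_add_div {H E G : ℝ → ℝ} {x a b c C : ℝ}
    (hH : HasDerivAt H (a + b * H x + c * H x ^ 2) x)
    (hE : HasDerivAt E (E x * (b + 2 * c * H x)) x)
    (hG : HasDerivAt G (c * E x) x) (hCG : C - G x ≠ 0) :
    HasDerivAt (fun t => H t + E t / (C - G t))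
      (a + b * (H x + E x / (C - G x)) + c * (H x + E x / (C - G x)) ^ 2) x := by
  refine (hH.add (hE.div (hG.const_sub C) hCG)).congr_deriv ?_
  field_simp
  ring

theorem mul_add_mul_sq_eq_of_case3 {b c f h : ℝ} (hc : c ≠ 0) (hh : h ≠ 0)
    (hb : b = (f - 4 * c ^ 2 * h ^ 2) / (4 * c * h)) :
    b * h + c * h ^ 2 = f / (4 * c) := by
  rw [hb]
  field_simp
  ring

/-- Theorem 3 (Case 3): with `H ≠ 0`, `H' = a + f₂/(4c)`,
`b = (f₂ − 4c²H²)/(4cH)`, `B' = b + 2cH = (f₂ + 4c²H²)/(4cH)` and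
`G' = c · exp B`, the function `y = H + exp B / (C₄ − G)` solves the Riccati
equation wherever `C₄ − G ≠ 0`. -/
theorem riccati_case3_general
    (p q : ℝ) (a b c f₂ H B G : ℝ → ℝ)
    (hc : ∀ x ∈ Set.Ioo p q, c x ≠ 0)
    (hHne : ∀ x ∈ Set.Ioo p q, H x ≠ 0)
    (hH : ∀ x ∈ Set.Ioo p q,
      HasDerivAt H (a x + f₂ x / (4 * c x)) x)
    (hb : ∀ x ∈ Set.Ioo p q,
      b x = (f₂ x - 4 * c x ^ 2 * H x ^ 2) / (4 * c x * H x))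
    (hB : ∀ x ∈ Set.Ioo p q, HasDerivAt B (b x + 2 * c x * H x) x)
    (hG : ∀ x ∈ Set.Ioo p q, HasDerivAt G (c x * Real.exp (B x)) x)
    (C₄ : ℝ) :
    ∀ x ∈ Set.Ioo p q, C₄ - G x ≠ 0 →
      HasDerivAt (fun t => H t + Real.exp (B t) / (C₄ - G t))
        (a x + b x * (H x + Real.exp (B x) / (C₄ - G x))
          + c x * (H x + Real.exp (B x) / (C₄ - G x)) ^ 2) x := by
  intro x hx hCG
  have hH_particular : HasDerivAt H (a x + b x * H x + c x * H x ^ 2) x := by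
    rw [add_assoc, mul_add_mul_sq_eq_of_case3 (hc x hx) (hHne x hx) (hb x hx)]
    exact hH x hx
  exact hasDerivAt_riccati_particular_add_div hH_particular (hB x hx).exp (hG x hx) hCG
end

section
/- Let I ⊆ ℝ be an open interval, a, b, f₂ : ℝ → ℝ with f₂(x) + b(x)² ≥ 0 on I, let ε ∈ {1, −1}, and set w(x) = −b(x) + ε·√(f₂(x) + b(x)²); assume w(x) ≠ 0 on I. Let E be differentiable on I with E'(x) = −f₂(x)/(2w(x)), and let J be differentiable on I with J(x) ≠ 0 and J'(x) = a(x)·exp(E(x)) for all x ∈ I. Define c(x) = w(x)·exp(E(x)) / (2J(x)). Then y_p(x) = J(x)·exp(−E(x)) solves the Riccati equation y_p'(x) = a(x) + b(x)y_p(x) + c(x)y_p(x)² for all x ∈ I. -/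
/-!
Write `w = -b + ε√(f₂ + b²)`; by the quadratic formula `w² + 2bw = f₂`. For `y = J·exp(-E)` the
choice of `c` gives `c y² = (w/2)·y`, while `y' = a + y·f₂/(2w) = a + (b + w/2)·y`.
-/

open Real

theorem sq_add_two_mul_neg_add_sign_mul_sqrt {b f ε : ℝ} (hε : ε = 1 ∨ ε = -1)
    (hnonneg : 0 ≤ f + b ^ 2) :
    (-b + ε * √(f + b ^ 2)) ^ 2 + 2 * b * (-b + ε * √(f + b ^ 2)) = f := by
  have hε2 : ε ^ 2 = 1 := by rcases hε with rfl | rfl <;> norm_num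
  linear_combination (√(f + b ^ 2)) ^ 2 * hε2 + Real.sq_sqrt hnonneg

theorem hasDerivAt_mul_exp_neg_riccati {a b c f w x : ℝ} {E J : ℝ → ℝ} (hw : w ≠ 0)
    (hroot : w ^ 2 + 2 * b * w = f) (hE : HasDerivAt E (-f / (2 * w)) x) (hJx : J x ≠ 0)
    (hJ : HasDerivAt J (a * exp (E x)) x) (hc : c = w * exp (E x) / (2 * J x)) :
    HasDerivAt (fun t => J t * exp (-E t))
      (a + b * (J x * exp (-E x)) + c * (J x * exp (-E x)) ^ 2) x := by
  have hexp : exp (E x) * exp (-E x) = 1 := by rw [← exp_add, add_neg_cancel, exp_zero]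
  have hcy : c * (J x * exp (-E x)) ^ 2 = w / 2 * (J x * exp (-E x)) :=
    calc c * (J x * exp (-E x)) ^ 2
        = w / 2 * (J x * exp (-E x)) * (exp (E x) * exp (-E x)) * (J x / J x) := by
          rw [hc]; ring
      _ = w / 2 * (J x * exp (-E x)) := by rw [hexp, div_self hJx, mul_one, mul_one]
  refine (hJ.mul hE.neg.exp).congr_deriv ?_
  rw [Pi.neg_apply, hcy, ← hroot]
  field_simp
  linear_combination 2 * a * hexp

/-- Particular solution underlying Theorem 4 (Case 4): with
`w = −b + ε√(f₂ + b²) ≠ 0`, `E' = −f₂/(2w)`, `J ≠ 0`, `J' = a · exp E` and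
`c = w · exp E / (2J)`, the function `y_p = J · exp(−E)` solves the Riccati
equation. -/
theorem riccati_case4_particular
    (p q : ℝ) (a b c f₂ E J : ℝ → ℝ) (ε : ℝ) (hε : ε = 1 ∨ ε = -1)
    (hnonneg : ∀ x ∈ Set.Ioo p q, f₂ x + b x ^ 2 ≥ 0)
    (hw : ∀ x ∈ Set.Ioo p q, -b x + ε * Real.sqrt (f₂ x + b x ^ 2) ≠ 0)
    (hE : ∀ x ∈ Set.Ioo p q,
      HasDerivAt E (-f₂ x / (2 * (-b x + ε * Real.sqrt (f₂ x + b x ^ 2)))) x)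
    (hJne : ∀ x ∈ Set.Ioo p q, J x ≠ 0)
    (hJ : ∀ x ∈ Set.Ioo p q, HasDerivAt J (a x * Real.exp (E x)) x)
    (hcdef : ∀ x ∈ Set.Ioo p q,
      c x = (-b x + ε * Real.sqrt (f₂ x + b x ^ 2)) * Real.exp (E x) / (2 * J x)) :
    ∀ x ∈ Set.Ioo p q,
      HasDerivAt (fun t => J t * Real.exp (-E t))
        (a x + b x * (J x * Real.exp (-E x))
          + c x * (J x * Real.exp (-E x)) ^ 2) x := by
  intro x hx
  exact hasDerivAt_mul_exp_neg_riccati (hw x hx)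
    (sq_add_two_mul_neg_add_sign_mul_sqrt hε (hnonneg x hx)) (hE x hx) (hJne x hx) (hJ x hx)
    (hcdef x hx)
end

section
/- Let I ⊆ ℝ be an open interval, b, c, f₃ : ℝ → ℝ with c(x) ≠ 0 on I, let K be differentiable on I with K'(x) = f₃(x)/(2c(x)), and define a(x) = (1/4)·[ f₃(x)/c(x) − 2b(x)K(x) − c(x)K(x)² ]. Let B be differentiable on I with B'(x) = b(x) + c(x)K(x), and G differentiable on I with G'(x) = c(x)·exp(B(x)). Then for every constant C₈ ∈ ℝ, the function y(x) = K(x)/2 + exp(B(x))/(C₈ − G(x)) satisfies y'(x) = a(x) + b(x)y(x) + c(x)y(x)² at every x ∈ I with C₈ − G(x) ≠ 0. -/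
/-!
Writing `y = K/2 + w` removes the inhomogeneous term: because `K' = f₃/(2c)` and `a` is
exactly `K'/2 - bK/2 - cK²/4`, the Riccati equation for `y` becomes the Bernoulli equation
`w' = (b + cK) w + c w²`. Its solutions are `w = exp B / (C₈ - G)`, since `1/w` satisfies the
linear equation `(1/w)' = -(b + cK)/w - c`.
-/

open Real

theorem hasDerivAt_exp_div_const_sub {B G : ℝ → ℝ} {β γ C x : ℝ}
    (hB : HasDerivAt B β x) (hG : HasDerivAt G (γ * exp (B x)) x) (hden : C - G x ≠ 0) :
    HasDerivAt (fun t => exp (B t) / (C - G t))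
      (β * (exp (B x) / (C - G x)) + γ * (exp (B x) / (C - G x)) ^ 2) x := by
  refine (hB.exp.div (hG.const_sub C) hden).congr_deriv ?_
  field_simp
  ring

theorem HasDerivAt.add_of_riccati_of_bernoulli {s w : ℝ → ℝ} {a b c σ x : ℝ}
    (hs : HasDerivAt s σ x) (hw : HasDerivAt w ((b + 2 * c * s x) * w x + c * w x ^ 2) x)
    (ha : a = σ - b * s x - c * s x ^ 2) :
    HasDerivAt (fun t => s t + w t) (a + b * (s x + w x) + c * (s x + w x) ^ 2) x := by
  refine (hs.add hw).congr_deriv ?_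
  rw [ha]
  ring

theorem riccati_case5_general_general
    (p q : ℝ) (a b c f₃ K B G : ℝ → ℝ)
    (hK : ∀ x ∈ Set.Ioo p q, HasDerivAt K (f₃ x / (2 * c x)) x)
    (ha : ∀ x ∈ Set.Ioo p q,
      a x = (1 / 4) * (f₃ x / c x - 2 * b x * K x - c x * K x ^ 2))
    (hB : ∀ x ∈ Set.Ioo p q, HasDerivAt B (b x + c x * K x) x)
    (hG : ∀ x ∈ Set.Ioo p q, HasDerivAt G (c x * Real.exp (B x)) x)
    (C₈ : ℝ) :
    ∀ x ∈ Set.Ioo p q, C₈ - G x ≠ 0 →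
      HasDerivAt (fun t => K t / 2 + Real.exp (B t) / (C₈ - G t))
        (a x + b x * (K x / 2 + Real.exp (B x) / (C₈ - G x))
          + c x * (K x / 2 + Real.exp (B x) / (C₈ - G x)) ^ 2) x := by
  intro x hx hden
  have hw := hasDerivAt_exp_div_const_sub (hB x hx) (hG x hx) hden
  refine ((hK x hx).div_const 2).add_of_riccati_of_bernoulli ?_ ?_
  · convert hw using 3
    ring
  · rw [ha x hx]
    ring

/-- Theorem 5 (Case 5): with `K' = f₃/(2c)`,
`a = (1/4)[f₃/c − 2bK − cK²]`, `B' = b + cK` and `G' = c · exp B`, the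
function `y = K/2 + exp B / (C₈ − G)` solves the Riccati equation wherever
`C₈ − G ≠ 0`. -/
theorem riccati_case5_general
    (p q : ℝ) (a b c f₃ K B G : ℝ → ℝ)
    (hc : ∀ x ∈ Set.Ioo p q, c x ≠ 0)
    (hK : ∀ x ∈ Set.Ioo p q, HasDerivAt K (f₃ x / (2 * c x)) x)
    (ha : ∀ x ∈ Set.Ioo p q,
      a x = (1 / 4) * (f₃ x / c x - 2 * b x * K x - c x * K x ^ 2))
    (hB : ∀ x ∈ Set.Ioo p q, HasDerivAt B (b x + c x * K x) x)
    (hG : ∀ x ∈ Set.Ioo p q, HasDerivAt G (c x * Real.exp (B x)) x)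
    (C₈ : ℝ) :
    ∀ x ∈ Set.Ioo p q, C₈ - G x ≠ 0 →
      HasDerivAt (fun t => K t / 2 + Real.exp (B t) / (C₈ - G t))
        (a x + b x * (K x / 2 + Real.exp (B x) / (C₈ - G x))
          + c x * (K x / 2 + Real.exp (B x) / (C₈ - G x)) ^ 2) x :=
  riccati_case5_general_general p q a b c f₃ K B G hK ha hB hG C₈
end

section
/- Let I ⊆ ℝ be an open interval, b, c, f₄ : ℝ → ℝ with c(x) ≠ 0 on I, and suppose the quotient q(x) = f₄(x)/c(x) is differentiable on I. Define a(x) = (1/(4c(x)))·[ 2c(x)·q'(x) − f₄(x)² − 2b(x)f₄(x) ]. Then y_p(x) = f₄(x)/(2c(x)) solves the Riccati equation y_p'(x) = a(x) + b(x)y_p(x) + c(x)y_p(x)² for all x ∈ I. -/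
/-- Particular solution underlying Theorem 7 (Case 7): with `f₄/c`
differentiable with derivative `q'` and
`a = (1/(4c))[2c·q' − f₄² − 2bf₄]`, the function `y_p = f₄/(2c)` solves the
Riccati equation. -/
theorem riccati_case7_particular
    (p q : ℝ) (a b c f₄ q' : ℝ → ℝ)
    (hc : ∀ x ∈ Set.Ioo p q, c x ≠ 0)
    (hq : ∀ x ∈ Set.Ioo p q, HasDerivAt (fun t => f₄ t / c t) (q' x) x)
    (ha : ∀ x ∈ Set.Ioo p q,
      a x = (1 / (4 * c x)) * (2 * c x * q' x - f₄ x ^ 2 - 2 * b x * f₄ x)) :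
    ∀ x ∈ Set.Ioo p q,
      HasDerivAt (fun t => f₄ t / (2 * c t))
        (a x + b x * (f₄ x / (2 * c x)) + c x * (f₄ x / (2 * c x)) ^ 2) x := by
  intro x hx
  have h := (hq x hx).div_const 2
  have hfun : (fun t => f₄ t / c t / 2) = fun t => f₄ t / (2 * c t) := by
    funext t; rw [div_div, mul_comm]
  rw [hfun] at h
  have hval : a x + b x * (f₄ x / (2 * c x)) + c x * (f₄ x / (2 * c x)) ^ 2
      = q' x / 2 := by
    rw [ha x hx]
    field_simp [hc x hx]
    ring
  rwa [hval]
end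

section
/- Let I ⊆ ℝ be an open interval, a, b, f₄ : ℝ → ℝ, let E be differentiable on I with E'(x) = f₄(x)/2 + b(x) for all x ∈ I, and let J be differentiable on I with J(x) ≠ 0 and J'(x) = 2a(x)·exp(−E(x)) for all x ∈ I. Define c(x) = f₄(x)·exp(−E(x)) / J(x). Then y_p(x) = (1/2)·J(x)·exp(E(x)) solves the Riccati equation y_p'(x) = a(x) + b(x)y_p(x) + c(x)y_p(x)² for all x ∈ I. -/
/-!
By variation of constants, `y = (1/2)·J·exp E` solves the linear equation
`y' = a + (f₄/2 + b)·y`. The choice of `c` is exactly what makes `c·y² = (f₄/2)·y`,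
so the quadratic term of the Riccati equation absorbs the extra linear term `(f₄/2)·y`.
-/

open Real

theorem hasDerivAt_half_mul_mul_exp {A e x : ℝ} {E J : ℝ → ℝ}
    (hE : HasDerivAt E e x) (hJ : HasDerivAt J (2 * A * exp (-E x)) x) :
    HasDerivAt (fun t => 1 / 2 * J t * exp (E t))
      (A + e * (1 / 2 * J x * exp (E x))) x := by
  refine ((hJ.const_mul (1 / 2)).mul hE.exp).congr_deriv ?_
  rw [exp_neg]
  field_simp

theorem div_mul_sq_half_mul_mul_exp (f E : ℝ) {J : ℝ} (hJ : J ≠ 0) :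
    f * exp (-E) / J * (1 / 2 * J * exp E) ^ 2 = f / 2 * (1 / 2 * J * exp E) := by
  rw [exp_neg]
  field_simp

/-- Particular solution underlying Theorem 9 (Case 9): with
`E' = f₄/2 + b`, `J ≠ 0`, `J' = 2a · exp(−E)` and `c = f₄ · exp(−E)/J`, the
function `y_p = (1/2)·J·exp E` solves the Riccati equation. -/
theorem riccati_case9_particular
    (p q : ℝ) (a b c f₄ E J : ℝ → ℝ)
    (hE : ∀ x ∈ Set.Ioo p q, HasDerivAt E (f₄ x / 2 + b x) x)
    (hJne : ∀ x ∈ Set.Ioo p q, J x ≠ 0)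
    (hJ : ∀ x ∈ Set.Ioo p q, HasDerivAt J (2 * a x * Real.exp (-E x)) x)
    (hcdef : ∀ x ∈ Set.Ioo p q, c x = f₄ x * Real.exp (-E x) / J x) :
    ∀ x ∈ Set.Ioo p q,
      HasDerivAt (fun t => (1 / 2) * J t * Real.exp (E t))
        (a x + b x * ((1 / 2) * J x * Real.exp (E x))
          + c x * ((1 / 2) * J x * Real.exp (E x)) ^ 2) x := by
  intro x hx
  rw [hcdef x hx, div_mul_sq_half_mul_mul_exp _ _ (hJne x hx)]
  convert hasDerivAt_half_mul_mul_exp (hE x hx) (hJ x hx) using 1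
  ring
end
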